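/- Define G : (0, π) → ℝ by G(r) = −cos(2r)/sin(r). For every unit vector p ∈ S³ ⊂ ℝ⁴, the positively 1-homogeneous function u : ℝ⁴ ∖ ℝp → ℝ defined by u(x) = |x|·G(θ_p(x)), where θ_p(x) = arccos(⟨x, p⟩/|x|) ∈ (0, π) is the angle between x and p, is harmonic: u is twice differentiable with vanishing Euclidean Laplacian on the open set ℝ⁴ ∖ ℝp. -/

import Mathlib

noncomputable section
open Real Set
abbrev E4 := EuclideanSpace ℝ (Fin 4)

/-- The profile `G(r) = −cos(2r)/sin(r)`. -/
def Gprof4 (r : ℝ) : ℝ := -Real.cos (2 * r) / Real.sin r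

/-- The Euclidean Laplacian of `u` at `x`, as the sum of second directional
derivatives along the standard orthonormal coordinate directions. -/
def lap4 (u : E4 → ℝ) (x : E4) : ℝ :=
  ∑ i : Fin 4, fderiv ℝ (fun y => fderiv ℝ u y (EuclideanSpace.single i 1)) x
    (EuclideanSpace.single i 1)

/-- `u` is harmonic on `U`: twice differentiable with vanishing Euclidean Laplacian. -/
def HarmonicOn4 (u : E4 → ℝ) (U : Set E4) : Prop :=
  ContDiffOn ℝ 2 u U ∧ ∀ x ∈ U, lap4 u x = 0

namespace S17

def ip (x y : E4) : ℝ := inner ℝ x y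
def innE (z : E4) : E4 →L[ℝ] ℝ := innerSL ℝ z
def L (a b : ℝ) (x p : E4) : E4 →L[ℝ] ℝ := a • innE x + b • innE p

@[simp] lemma innE_apply (z v : E4) : innE z v = ip z v := rfl

@[simp] lemma L_apply (a b : ℝ) (x p v : E4) : L a b x p v = a * ip x v + b * ip p v := by
  simp [L, innE, ip]

lemma h_ip (v x : E4) : HasFDerivAt (fun y => ip y v) (innE v) x := by
  have : (fun y : E4 => ip y v) = fun y => innE v y := by
    ext y; simp [ip, innE, real_inner_comm]
  rw [this]
  exact (innE v).hasFDerivAt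

def nF (x : E4) : ℝ := ip x x
def tF (p x : E4) : ℝ := ip x p
def aF (p x : E4) : ℝ := nF x - tF p x * tF p x
def bF (p x : E4) : ℝ := nF x - 2*(tF p x * tF p x)
def sF (p x : E4) : ℝ := Real.sqrt (aF p x)
def wF (p x : E4) : ℝ := bF p x / sF p x
def d1F (p x : E4) : ℝ := 2 / sF p x - bF p x / (sF p x)^3
def d2F (p x : E4) : ℝ := -(4 * tF p x) / sF p x + bF p x * tF p x / (sF p x)^3
def e1F (p x : E4) : ℝ := -4/(sF p x)^3 + 3*bF p x/(sF p x)^5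
def e2F (p x : E4) : ℝ := 6*tF p x/(sF p x)^3 - 3*bF p x*tF p x/(sF p x)^5
def f2F (p x : E4) : ℝ := -4/sF p x - 8*(tF p x)^2/(sF p x)^3 + bF p x/(sF p x)^3
  + 3*bF p x*(tF p x)^2/(sF p x)^5

lemma h_n (x p : E4) : HasFDerivAt nF (L 2 0 x p) x := by
  have h := (hasFDerivAt_id x).inner ℝ (hasFDerivAt_id x)
  refine h.congr_fderiv (Eq.symm ?_)
  refine ContinuousLinearMap.ext fun v => ?_
  simp [ip, real_inner_comm]
  ring

lemma h_t (p x : E4) : HasFDerivAt (tF p) (innE p) x := h_ip p x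

lemma h_a (p x : E4) : HasFDerivAt (aF p) (L 2 (-(2*tF p x)) x p) x := by
  have h := (h_n x p).sub ((h_t p x).mul (h_t p x))
  refine h.congr_fderiv (Eq.symm ?_)
  refine ContinuousLinearMap.ext fun v => ?_
  simp [innE, ip, tF]
  ring

lemma h_b (p x : E4) : HasFDerivAt (bF p) (L 2 (-(4*tF p x)) x p) x := by
  have h := (h_n x p).sub ((hasFDerivAt_const (2:ℝ) x).mul ((h_t p x).mul (h_t p x)))
  refine h.congr_fderiv (Eq.symm ?_)
  refine ContinuousLinearMap.ext fun v => ?_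
  simp [innE, ip, tF]
  ring


lemma s_pos {p x : E4} (hA : 0 < aF p x) : 0 < sF p x := Real.sqrt_pos.mpr hA
lemma s_sq {p x : E4} (hA : 0 < aF p x) : sF p x ^ 2 = aF p x := Real.sq_sqrt hA.le

lemma h_s {p x : E4} (hA : 0 < aF p x) :
    HasFDerivAt (sF p) (L (1/sF p x) (-(tF p x/sF p x)) x p) x := by
  have h := (Real.hasDerivAt_sqrt hA.ne').comp_hasFDerivAt x (h_a p x)
  have h2 : sF p = (fun t => Real.sqrt t) ∘ (aF p) := rfl
  rw [h2]
  refine h.congr_fderiv (Eq.symm ?_)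
  refine ContinuousLinearMap.ext fun v => ?_
  have hs0 : Real.sqrt (aF p x) ≠ 0 := (s_pos hA).ne'
  show (L _ _ x p) v = _
  simp only [L_apply, ContinuousLinearMap.smul_apply, Function.comp, smul_eq_mul]
  field_simp

lemma h_sinv {p x : E4} (hA : 0 < aF p x) :
    HasFDerivAt (fun y => (sF p y)⁻¹)
      (L (-(1/(sF p x)^3)) (tF p x/(sF p x)^3) x p) x := by
  have h := (hasDerivAt_inv (s_pos hA).ne').comp_hasFDerivAt x (h_s hA)
  refine h.congr_fderiv (Eq.symm ?_)
  refine ContinuousLinearMap.ext fun v => ?_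
  have hs0 := (s_pos hA).ne'
  simp only [L_apply, ContinuousLinearMap.smul_apply, smul_eq_mul]
  field_simp
  ring

lemma h_w {p x : E4} (hA : 0 < aF p x) :
    HasFDerivAt (wF p) (L (d1F p x) (d2F p x) x p) x := by
  have h := (h_b p x).mul (h_sinv hA)
  have h2 : wF p = fun y => bF p y * (sF p y)⁻¹ := by
    funext y; simp [wF, div_eq_mul_inv]
  rw [h2]
  refine h.congr_fderiv (Eq.symm ?_)
  refine ContinuousLinearMap.ext fun v => ?_
  have hs0 := (s_pos hA).ne'
  simp only [L_apply, ContinuousLinearMap.add_apply, ContinuousLinearMap.smul_apply,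
    smul_eq_mul, d1F, d2F, bF, nF, tF]
  field_simp
  ring

lemma h_d1 {p x : E4} (hA : 0 < aF p x) :
    HasFDerivAt (d1F p) (L (e1F p x) (e2F p x) x p) x := by
  have h := ((hasFDerivAt_const (2:ℝ) x).mul (h_sinv hA)).sub
    ((h_b p x).mul (((h_sinv hA).mul (h_sinv hA)).mul (h_sinv hA)))
  have h2 : d1F p = fun y => 2 * (sF p y)⁻¹ - bF p y * ((sF p y)⁻¹ * (sF p y)⁻¹ * (sF p y)⁻¹) := by
    funext y; simp [d1F]; ring
  rw [h2]
  refine h.congr_fderiv (Eq.symm ?_)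
  refine ContinuousLinearMap.ext fun v => ?_
  have hs0 := (s_pos hA).ne'
  simp only [L_apply, ContinuousLinearMap.add_apply, ContinuousLinearMap.sub_apply,
    ContinuousLinearMap.smul_apply, ContinuousLinearMap.zero_apply, innE_apply, smul_eq_mul, e1F, e2F, Pi.mul_apply]
  field_simp
  ring

lemma h_d2 {p x : E4} (hA : 0 < aF p x) :
    HasFDerivAt (d2F p) (L (e2F p x) (f2F p x) x p) x := by
  have h := (((hasFDerivAt_const (-4:ℝ) x).mul (h_t p x)).mul (h_sinv hA)).add
    (((h_b p x).mul (h_t p x)).mul (((h_sinv hA).mul (h_sinv hA)).mul (h_sinv hA)))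
  have h2 : d2F p = fun y => (-4 * tF p y) * (sF p y)⁻¹
      + bF p y * tF p y * ((sF p y)⁻¹ * (sF p y)⁻¹ * (sF p y)⁻¹) := by
    funext y; simp [d2F]; ring
  rw [h2]
  refine h.congr_fderiv (Eq.symm ?_)
  refine ContinuousLinearMap.ext fun v => ?_
  have hs0 := (s_pos hA).ne'
  simp only [L_apply, ContinuousLinearMap.add_apply, ContinuousLinearMap.sub_apply,
    ContinuousLinearMap.smul_apply, ContinuousLinearMap.zero_apply, innE_apply, smul_eq_mul, e2F, f2F, Pi.mul_apply]
  field_simp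
  ring


lemma hApos {p x : E4} (hp : ‖p‖ = 1) (hx : ∀ t : ℝ, x ≠ t • p) : 0 < aF p x := by
  have hne : x - tF p x • p ≠ 0 := by
    intro h
    exact hx (tF p x) (by rw [sub_eq_zero] at h; exact h)
  have h1 : 0 < ‖x - tF p x • p‖^2 := pow_pos (norm_pos_iff.mpr hne) 2
  have h2 : ‖x - tF p x • p‖^2 = aF p x := by
    rw [@norm_sub_sq_real]
    have e1 : (inner ℝ x (tF p x • p) : ℝ) = tF p x * tF p x := by
      rw [real_inner_smul_right]; rfl
    have e2 : ‖tF p x • p‖^2 = tF p x * tF p x := by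
      rw [norm_smul, hp]; simp [sq_abs, sq]
    have e3 : nF x = ‖x‖^2 := real_inner_self_eq_norm_sq x
    rw [e1, e2]
    simp only [aF, e3]
    ring
  rw [← h2]; exact h1

lemma hU_open (p : E4) : IsOpen {x : E4 | ∀ t : ℝ, x ≠ t • p} := by
  have : {x : E4 | ∀ t : ℝ, x ≠ t • p} = (↑(Submodule.span ℝ ({p} : Set E4)))ᶜ := by
    ext x
    simp only [Set.mem_compl_iff, SetLike.mem_coe, Submodule.mem_span_singleton, Set.mem_setOf_eq]
    constructor
    · rintro h ⟨a, rfl⟩; exact h a rfl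
    · intro h t ht; exact h ⟨t, ht.symm⟩
  rw [this]
  exact (Submodule.closed_of_finiteDimensional _).isOpen_compl

lemma key_id {p x : E4} (hA : 0 < aF p x) :
    4 * d1F p x + e1F p x * nF x + 2 * e2F p x * tF p x + f2F p x = 0 := by
  have hs := (s_pos hA).ne'
  have hsq := s_sq hA
  have hn : nF x = sF p x ^ 2 + tF p x * tF p x := by
    rw [hsq]; simp [aF]
  simp only [d1F, e1F, e2F, f2F, bF, hn]
  field_simp
  ring

lemma h_gv {p x : E4} (hA : 0 < aF p x) (v : E4) :
    HasFDerivAt (fun y => d1F p y * ip y v + d2F p y * ip p v)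
      (d1F p x • innE v + ip x v • L (e1F p x) (e2F p x) x p
        + ip p v • L (e2F p x) (f2F p x) x p) x := by
  have h := ((h_d1 hA).mul (h_ip v x)).add ((h_d2 hA).mul_const (ip p v))
  exact h

lemma fderiv_w_eval {p y : E4} (hA : 0 < aF p y) (v : E4) :
    fderiv ℝ (wF p) y v = d1F p y * ip y v + d2F p y * ip p v := by
  rw [(h_w hA).fderiv]; simp

lemma lap_w (p : E4) (hp : ‖p‖ = 1) {x : E4} (hx : ∀ t : ℝ, x ≠ t • p) :
    lap4 (wF p) x = 0 := by
  have hA := hApos hp hx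
  have hmem : ∀ᶠ y in nhds x, ∀ t : ℝ, y ≠ t • p :=
    (hU_open p).eventually_mem hx
  have hterm : ∀ v : E4, fderiv ℝ (fun y => fderiv ℝ (wF p) y v) x v
      = d1F p x * ip v v + ip x v * (e1F p x * ip x v + e2F p x * ip p v)
        + ip p v * (e2F p x * ip x v + f2F p x * ip p v) := by
    intro v
    have hev : (fun y => fderiv ℝ (wF p) y v)
        =ᶠ[nhds x] (fun y => d1F p y * ip y v + d2F p y * ip p v) := by
      filter_upwards [hmem] with y hy
      exact fderiv_w_eval (hApos hp hy) v
    rw [hev.fderiv_eq, (h_gv hA v).fderiv]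
    simp
    try ring
  unfold lap4
  have hsingle : ∀ (z : E4) (i : Fin 4), ip z (EuclideanSpace.single i 1) = z i := by
    intro z i
    simp [ip, EuclideanSpace.inner_single_right]
  have hsum : ∀ z w : E4, ∑ i : Fin 4, z i * w i = ip z w := by
    intro z w
    simp [ip, PiLp.inner_apply, RCLike.inner_apply]
    exact Finset.sum_congr rfl fun i _ => mul_comm _ _
  calc ∑ i : Fin 4, fderiv ℝ (fun y => fderiv ℝ (wF p) y (EuclideanSpace.single i 1)) x
        (EuclideanSpace.single i 1)
      = ∑ i : Fin 4, (d1F p x * 1 + e1F p x * (x i * x i)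
          + 2 * e2F p x * (x i * p i) + f2F p x * (p i * p i)) := by
        refine Finset.sum_congr rfl fun i _ => ?_
        rw [hterm, hsingle, hsingle, hsingle]
        simp [EuclideanSpace.single_apply]
        ring
    _ = 4 * d1F p x + e1F p x * nF x + 2 * e2F p x * tF p x + f2F p x := by
        simp only [Finset.sum_add_distrib, ← Finset.mul_sum]
        rw [hsum x x, hsum x p, hsum p p]
        have hpp : ip p p = 1 := by
          rw [ip, real_inner_self_eq_norm_sq, hp]; norm_num
        rw [hpp]
        simp [nF, tF, ip, real_inner_comm]
        ring
    _ = 0 := key_id hA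


lemma u_eq (p : E4) (hp : ‖p‖ = 1) {x : E4} (hx : ∀ t : ℝ, x ≠ t • p) :
    ‖x‖ * Gprof4 (Real.arccos ((inner ℝ x p : ℝ) / ‖x‖)) = wF p x := by
  have hA := hApos hp hx
  have hx0 : x ≠ 0 := by
    intro h; exact hx 0 (by simp [h])
  have hr : (0:ℝ) < ‖x‖ := norm_pos_iff.mpr hx0
  have hnr : nF x = ‖x‖^2 := real_inner_self_eq_norm_sq x
  have hip : (inner ℝ x p : ℝ) = tF p x := rfl
  rw [hip]
  have htlt : (tF p x)^2 < ‖x‖^2 := by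
    have h0 : aF p x = ‖x‖^2 - (tF p x)^2 := by
      simp only [aF, hnr]; ring
    nlinarith [hA]
  have hθ2 : (tF p x / ‖x‖)^2 < 1 := by
    rw [div_pow, div_lt_one (by positivity)]
    exact htlt
  have hle1 : -1 ≤ tF p x / ‖x‖ := by nlinarith [hθ2]
  have hle2 : tF p x / ‖x‖ ≤ 1 := by nlinarith [hθ2]
  have hcos := Real.cos_arccos hle1 hle2
  have hsin := Real.sin_arccos (tF p x / ‖x‖)
  have hone : 1 - (tF p x / ‖x‖)^2 = aF p x / ‖x‖^2 := by
    rw [div_pow]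
    rw [aF, hnr]
    field_simp
  have hsq : Real.sqrt (1 - (tF p x / ‖x‖)^2) = sF p x / ‖x‖ := by
    rw [hone, Real.sqrt_div hA.le, Real.sqrt_sq hr.le]
    rfl
  have hs0 := (s_pos hA).ne'
  unfold Gprof4
  rw [Real.cos_two_mul, hcos, hsin, hsq]
  have hb : wF p x = (‖x‖^2 - 2*(tF p x * tF p x))/sF p x := by
    simp only [wF, bF, hnr]
  rw [hb]
  field_simp
  ring

lemma contDiffOn_w (p : E4) (hp : ‖p‖ = 1) :
    ContDiffOn ℝ 2 (wF p) {x : E4 | ∀ t : ℝ, x ≠ t • p} := by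
  intro x hx
  have hA := hApos hp hx
  have hn : ContDiff ℝ 2 nF := by
    have h : ContDiff ℝ 2 (fun x : E4 => (inner ℝ x x : ℝ)) := contDiff_id.inner ℝ contDiff_id
    exact h
  have ht : ContDiff ℝ 2 (tF p) := by
    have h : ContDiff ℝ 2 (fun x : E4 => (inner ℝ x p : ℝ)) := contDiff_id.inner ℝ contDiff_const
    exact h
  have ha : ContDiff ℝ 2 (aF p) := hn.sub (ht.mul ht)
  have hb : ContDiff ℝ 2 (bF p) := hn.sub (contDiff_const.mul (ht.mul ht))
  have hs : ContDiffAt ℝ 2 (sF p) x :=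
    (Real.contDiffAt_sqrt hA.ne').comp x ha.contDiffAt
  exact ((hb.contDiffAt.div hs (s_pos hA).ne')).contDiffWithinAt

end S17

theorem statement17 (p : E4) (hp : ‖p‖ = 1) :
    HarmonicOn4 (fun x => ‖x‖ * Gprof4 (Real.arccos ((inner ℝ x p : ℝ) / ‖x‖)))
      {x : E4 | ∀ t : ℝ, x ≠ t • p} := by
  constructor
  · exact (S17.contDiffOn_w p hp).congr fun x hx => S17.u_eq p hp hx
  · intro x hx
    have heq : (fun x : E4 => ‖x‖ * Gprof4 (Real.arccos ((inner ℝ x p : ℝ) / ‖x‖)))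
        =ᶠ[nhds x] S17.wF p := by
      filter_upwards [(S17.hU_open p).eventually_mem hx] with y hy
      exact S17.u_eq p hp hy
    have hlap : lap4 (fun x : E4 => ‖x‖ * Gprof4 (Real.arccos ((inner ℝ x p : ℝ) / ‖x‖))) x
        = lap4 (S17.wF p) x := by
      unfold lap4
      refine Finset.sum_congr rfl fun i _ => ?_
      have h1 : (fun y => fderiv ℝ (fun x : E4 =>
            ‖x‖ * Gprof4 (Real.arccos ((inner ℝ x p : ℝ) / ‖x‖))) y (EuclideanSpace.single i 1))
          =ᶠ[nhds x] (fun y => fderiv ℝ (S17.wF p) y (EuclideanSpace.single i 1)) := by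
        filter_upwards [heq.fderiv (𝕜 := ℝ)] with y hy
        rw [hy]
      rw [h1.fderiv_eq]
    rw [hlap]
    exact S17.lap_w p hp hx
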